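/- arXiv:2410.16056 — 10 statements merged into one kernel-verified Lean document; each statement's English description precedes it below -/
import Mathlib

section
/- Let K be a field of characteristic 0, A a K-vector space, and ∘ a K-bilinear operation on A. Then the following two conditions are equivalent: (1) for all x,y,z ∈ A, (x∘y)∘z − (y∘x)∘z = x∘(y∘z) − y∘(x∘z) and (x∘y)∘z = (x∘z)∘y; (2) for all x,y,z ∈ A, (x∘y)∘z = (x∘z)∘y and 2(x∘y − y∘x)∘z = (x∘z)∘y − y∘(x∘z) + x∘(y∘z) − (y∘z)∘x. -/
/-- For a K-bilinear operation ∘ on a K-vector space A (K a field of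
characteristic 0), the two conditions defining a Novikov algebra are equivalent:
(1) left symmetry and right commutativity;
(2) right commutativity and 2[x,y]∘z = [x∘z,y] + [x,y∘z], where [x,y] = x∘y − y∘x. -/
theorem stmt_0 (K : Type*) [Field K] [CharZero K] (A : Type*) [AddCommGroup A] [Module K A]
    (mul : A →ₗ[K] A →ₗ[K] A) :
    (∀ x y z : A,
        mul (mul x y) z - mul (mul y x) z = mul x (mul y z) - mul y (mul x z) ∧
        mul (mul x y) z = mul (mul x z) y) ↔
    (∀ x y z : A,
        mul (mul x y) z = mul (mul x z) y ∧
        2 • mul (mul x y - mul y x) z =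
          (mul (mul x z) y - mul y (mul x z)) + (mul x (mul y z) - mul (mul y z) x)) := by
  constructor
  · intro h x y z
    obtain ⟨h1, h2⟩ := h x y z
    have h4 := (h y x z).2
    refine ⟨h2, ?_⟩
    rw [map_sub, LinearMap.sub_apply, two_smul]
    nth_rewrite 1 [h1]
    rw [h2, h4]
    abel
  · intro h x y z
    obtain ⟨hrc, heq⟩ := h x y z
    have hrc' := (h y x z).1
    refine ⟨?_, hrc⟩
    rw [map_sub, LinearMap.sub_apply, two_smul, ← hrc, ← hrc'] at heq
    have key : (mul (mul x y) z - mul (mul y x) z) + (mul (mul x y) z - mul (mul y x) z)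
        = (mul (mul x y) z - mul (mul y x) z) + (mul x (mul y z) - mul y (mul x z)) := by
      rw [heq]; abel
    exact add_left_cancel key
end

section
/- Let (A,·,∘) be a Novikov-Poisson algebra over a field K of characteristic 0. For each t ∈ K define x ∗_t y := x·y + t (x∘y). Then for every t ∈ K the pair (A, ∗_t) is a Novikov algebra, i.e. for all x,y,z ∈ A: (x∗_t y)∗_t z − (y∗_t x)∗_t z = x∗_t(y∗_t z) − y∗_t(x∗_t z) and (x∗_t y)∗_t z = (x∗_t z)∗_t y. Moreover x∗_t y − y∗_t x = t(x∘y − y∘x) for all x,y ∈ A. -/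
/-!
Expanding `(x ∗ₜ y) ∗ₜ z` by bilinearity gives a polynomial in `t` of degree two. In each Novikov
identity the `t⁰`-part holds because `·` is commutative and associative, the `t²`-part is the
same identity for `∘`, and the `t¹`-part is exactly what the two Novikov–Poisson compatibility
conditions provide.
-/

structure IsNovikov {A : Type*} [AddGroup A] (μ : A → A → A) : Prop where
  leftSymm : ∀ x y z, μ (μ x y) z - μ (μ y x) z = μ x (μ y z) - μ y (μ x z)
  rightComm : ∀ x y z, μ (μ x y) z = μ (μ x z) y

section NovikovPoisson

variable {K A : Type*} [CommRing K] [NonUnitalCommRing A] [Module K A]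

structure IsNovikovPoisson (mulN : A →ₗ[K] A →ₗ[K] A) : Prop where
  isNovikov : IsNovikov fun x y => mulN x y
  mulN_mul_left : ∀ x y z, mulN (x * y) z = x * mulN y z
  mulN_commutator_mul : ∀ x y z, mulN x y * z - mulN y x * z = mulN x (y * z) - mulN y (x * z)

def novikovDeform (mulN : A →ₗ[K] A →ₗ[K] A) (t : K) (x y : A) : A :=
  x * y + t • mulN x y

theorem novikovDeform_sub_swap (mulN : A →ₗ[K] A →ₗ[K] A) (t : K) (x y : A) :
    novikovDeform mulN t x y - novikovDeform mulN t y x = t • (mulN x y - mulN y x) := by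
  simp only [novikovDeform, smul_sub, mul_comm x y]
  abel

namespace IsNovikovPoisson

variable {mulN : A →ₗ[K] A →ₗ[K] A}

theorem mulN_mul_right (h : IsNovikovPoisson mulN) (x y z : A) :
    mulN (x * y) z = y * mulN x z := by
  rw [mul_comm, h.mulN_mul_left]

theorem isNovikov_novikovDeform [SMulCommClass K A A] [IsScalarTower K A A]
    (h : IsNovikovPoisson mulN) (t : K) :
    IsNovikov (novikovDeform mulN t) where
  leftSymm x y z := by
    simp only [novikovDeform, map_add, map_smul, LinearMap.add_apply, LinearMap.smul_apply,
      add_mul, mul_add, smul_mul_assoc, mul_smul_comm, smul_add, smul_smul]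
    linear_combination (norm := module) mul_assoc x y z - mul_assoc y x z +
      t • (h.mulN_mul_left x y z - h.mulN_mul_left y x z + h.mulN_commutator_mul x y z) +
      (t * t) • h.isNovikov.leftSymm x y z
  rightComm x y z := by
    simp only [novikovDeform, map_add, map_smul, LinearMap.add_apply, LinearMap.smul_apply,
      add_mul, smul_mul_assoc, smul_add, smul_smul]
    linear_combination (norm := module) mul_right_comm x y z +
      t • (h.mulN_mul_right x y z - h.mulN_mul_right x z y +
        mul_comm (mulN x y) z - mul_comm (mulN x z) y) +
      (t * t) • h.isNovikov.rightComm x y z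

end IsNovikovPoisson

end NovikovPoisson

theorem stmt_7_general (K : Type*) [Field K] (A : Type*) [NonUnitalCommRing A]
    [Module K A] [SMulCommClass K A A] [IsScalarTower K A A]
    (mulN : A →ₗ[K] A →ₗ[K] A)
    (hls : ∀ x y z : A,
        mulN (mulN x y) z - mulN (mulN y x) z = mulN x (mulN y z) - mulN y (mulN x z))
    (hrc : ∀ x y z : A, mulN (mulN x y) z = mulN (mulN x z) y)
    (hnp1 : ∀ x y z : A, mulN (x * y) z = x * mulN y z)
    (hnp2 : ∀ x y z : A, mulN x y * z - mulN y x * z = mulN x (y * z) - mulN y (x * z))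
    (star : K → A → A → A)
    (hstar : ∀ (t : K) (x y : A), star t x y = x * y + t • mulN x y) :
    ∀ t : K,
      (∀ x y z : A,
          star t (star t x y) z - star t (star t y x) z =
            star t x (star t y z) - star t y (star t x z)) ∧
      (∀ x y z : A, star t (star t x y) z = star t (star t x z) y) ∧
      (∀ x y : A, star t x y - star t y x = t • (mulN x y - mulN y x)) := by
  obtain rfl : star = novikovDeform mulN := funext₃ hstar
  intro t
  have hNP : IsNovikovPoisson mulN := ⟨⟨hls, hrc⟩, hnp1, hnp2⟩
  obtain ⟨leftSymm, rightComm⟩ := hNP.isNovikov_novikovDeform t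
  exact ⟨leftSymm, rightComm, novikovDeform_sub_swap mulN t⟩

/-- For a Novikov-Poisson algebra (A,·,∘) over a field K of characteristic 0 and
any t ∈ K, the operation x ∗_t y := x·y + t(x∘y) is a Novikov product on A, and its
commutator is t times the commutator of ∘. -/
theorem stmt_7 (K : Type*) [Field K] [CharZero K] (A : Type*) [NonUnitalCommRing A]
    [Module K A] [SMulCommClass K A A] [IsScalarTower K A A]
    (mulN : A →ₗ[K] A →ₗ[K] A)
    (hls : ∀ x y z : A,
        mulN (mulN x y) z - mulN (mulN y x) z = mulN x (mulN y z) - mulN y (mulN x z))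
    (hrc : ∀ x y z : A, mulN (mulN x y) z = mulN (mulN x z) y)
    (hnp1 : ∀ x y z : A, mulN (x * y) z = x * mulN y z)
    (hnp2 : ∀ x y z : A, mulN x y * z - mulN y x * z = mulN x (y * z) - mulN y (x * z))
    (star : K → A → A → A)
    (hstar : ∀ (t : K) (x y : A), star t x y = x * y + t • mulN x y) :
    ∀ t : K,
      (∀ x y z : A,
          star t (star t x y) z - star t (star t y x) z =
            star t x (star t y z) - star t y (star t x z)) ∧
      (∀ x y z : A, star t (star t x y) z = star t (star t x z) y) ∧
      (∀ x y : A, star t x y - star t y x = t • (mulN x y - mulN y x)) :=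
  stmt_7_general K A mulN hls hrc hnp1 hnp2 star hstar
end

section
/- Let (A,·,∘) be a Novikov-Poisson algebra over a field K of characteristic 0, and define [x,y] := x∘y − y∘x for all x,y ∈ A. Then (A,·,[,]) is a transposed Poisson algebra: [,] is antisymmetric, satisfies the Jacobi identity, and 2[x,y]·z = [x, y·z] + [x·z, y] for all x,y,z ∈ A. -/
/-- The commutator bracket [x,y] = x∘y − y∘x of a Novikov-Poisson algebra
(A,·,∘) over a field K of characteristic 0 makes (A,·,[,]) a transposed Poisson algebra. -/
theorem stmt_8 (K : Type*) [Field K] [CharZero K] (A : Type*) [NonUnitalCommRing A]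
    [Module K A] [SMulCommClass K A A] [IsScalarTower K A A]
    (mulN : A →ₗ[K] A →ₗ[K] A)
    (hls : ∀ x y z : A,
        mulN (mulN x y) z - mulN (mulN y x) z = mulN x (mulN y z) - mulN y (mulN x z))
    (hrc : ∀ x y z : A, mulN (mulN x y) z = mulN (mulN x z) y)
    (hnp1 : ∀ x y z : A, mulN (x * y) z = x * mulN y z)
    (hnp2 : ∀ x y z : A, mulN x y * z - mulN y x * z = mulN x (y * z) - mulN y (x * z))
    (bracket : A → A → A)
    (hb : ∀ x y : A, bracket x y = mulN x y - mulN y x) :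
    (∀ x y : A, bracket x y = - bracket y x) ∧
    (∀ x y z : A,
        bracket (bracket x y) z + bracket (bracket y z) x + bracket (bracket z x) y = 0) ∧
    (∀ x y z : A, 2 • (bracket x y * z) = bracket x (y * z) + bracket (x * z) y) := by
  refine ⟨fun x y => by rw [hb, hb]; abel, fun x y z => ?_, fun x y z => ?_⟩
  · simp only [hb, map_sub, LinearMap.sub_apply]
    have h1 := hls x y z
    have h2 := hls y z x
    have h3 := hls z x y
    linear_combination (norm := abel) h1 + h2 + h3
  · have e1 : mulN (y * z) x = mulN y x * z := by
      rw [mul_comm y z, hnp1]; exact mul_comm _ _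
    have e2 : mulN (x * z) y = mulN x y * z := by
      rw [mul_comm x z, hnp1]; exact mul_comm _ _
    have h3 := hnp2 x y z
    simp only [hb, two_smul, sub_mul, e1, e2]
    linear_combination (norm := abel) h3
end

section
/- Let (A,·) be a commutative associative algebra over a field K of characteristic 0 and D : A → A a derivation. Define [x,y] := x·D(y) − y·D(x) for all x,y ∈ A. Then (A,·,[,]) is a transposed Poisson algebra: [,] is antisymmetric, satisfies the Jacobi identity, and 2[x,y]·z = [x, y·z] + [x·z, y] for all x,y,z ∈ A. -/
/-- If (A,·) is a commutative associative algebra over a field K of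
characteristic 0 and D a derivation, then [x,y] := x·D(y) − y·D(x) makes (A,·,[,]) a
transposed Poisson algebra. -/
theorem stmt_9 (K : Type*) [Field K] [CharZero K] (A : Type*) [NonUnitalCommRing A]
    [Module K A] [SMulCommClass K A A] [IsScalarTower K A A]
    (D : A →ₗ[K] A) (hD : ∀ x y : A, D (x * y) = D x * y + x * D y)
    (bracket : A → A → A)
    (hb : ∀ x y : A, bracket x y = x * D y - y * D x) :
    (∀ x y : A, bracket x y = - bracket y x) ∧
    (∀ x y z : A,
        bracket (bracket x y) z + bracket (bracket y z) x + bracket (bracket z x) y = 0) ∧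
    (∀ x y z : A, 2 • (bracket x y * z) = bracket x (y * z) + bracket (x * z) y) := by
  refine ⟨fun x y => by simp [hb], fun x y z => ?_, fun x y z => ?_⟩
  · simp only [hb, map_sub, hD, mul_sub, sub_mul, mul_add, add_mul]
    simp only [mul_comm, mul_left_comm, mul_assoc]
    abel
  · simp only [hb, hD, two_smul, mul_sub, sub_mul, mul_add, add_mul]
    simp only [mul_comm, mul_left_comm, mul_assoc]
    abel
end

section
/- Let (A,·,[,]) be a transposed Poisson algebra over a field K of characteristic 0 such that (A,·) is unital with unit 1. Define D : A → A by D(x) := [1, x] and x∘y := x·D(y). Then: (a) D is a derivation of (A,·); (b) [x,y] = x·D(y) − y·D(x) for all x,y ∈ A; and (c) (A,·,∘) is a Novikov-Poisson algebra satisfying x∘y − y∘x = [x,y] for all x,y ∈ A. In particular, every unital transposed Poisson algebra is of Novikov-Poisson type. -/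
/-- Let (A,·,[,]) be a unital transposed Poisson algebra over a field K of
characteristic 0.  With D(x) := [1,x] and x∘y := x·D(y): (a) D is a derivation of (A,·);
(b) [x,y] = x·D(y) − y·D(x); (c) (A,·,∘) is a Novikov-Poisson algebra whose commutator
is [,].  Hence every unital transposed Poisson algebra is of Novikov-Poisson type. -/
theorem stmt_10 (K : Type*) [Field K] [CharZero K] (A : Type*) [CommRing A] [Algebra K A]
    (bracket : A →ₗ[K] A →ₗ[K] A)
    (halt : ∀ x : A, bracket x x = 0)
    (hjac : ∀ x y z : A,
        bracket (bracket x y) z + bracket (bracket y z) x + bracket (bracket z x) y = 0)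
    (hleib : ∀ x y z : A, 2 • (bracket x y * z) = bracket x (y * z) + bracket (x * z) y)
    (D : A → A) (hDdef : ∀ x : A, D x = bracket 1 x)
    (mulN : A → A → A) (hmulN : ∀ x y : A, mulN x y = x * D y) :
    -- (a) D is a derivation of (A,·)
    (∀ x y : A, D (x * y) = D x * y + x * D y) ∧
    -- (b) [x,y] = x·D(y) − y·D(x)
    (∀ x y : A, bracket x y = x * D y - y * D x) ∧
    -- (c) (A,·,∘) is a Novikov-Poisson algebra with commutator [,]
    (∀ x y z : A,
        mulN (mulN x y) z - mulN (mulN y x) z = mulN x (mulN y z) - mulN y (mulN x z)) ∧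
    (∀ x y z : A, mulN (mulN x y) z = mulN (mulN x z) y) ∧
    (∀ x y z : A, mulN (x * y) z = x * mulN y z) ∧
    (∀ x y z : A, mulN x y * z - mulN y x * z = mulN x (y * z) - mulN y (x * z)) ∧
    (∀ x y : A, mulN x y - mulN y x = bracket x y) := by
  have two_cancel : ∀ a b : A, a + a = b + b → a = b := by
    intro a b h
    have h2 : (2 : K) • a = (2 : K) • b := by
      rw [two_smul, two_smul]; exact h
    exact smul_right_injective A (two_ne_zero) h2
  have skew : ∀ x y : A, bracket y x = - bracket x y := by
    intro x y
    have h := halt (x + y)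
    simp [map_add, halt x, halt y] at h
    linear_combination h
  have hD : ∀ y z : A, D (y * z) = D y * z + y * D z := by
    intro y z
    apply two_cancel
    have h1 := hleib 1 y z
    have h2 := hleib 1 z y
    rw [two_smul] at h1 h2
    simp only [one_mul] at h1 h2
    rw [mul_comm z y] at h2
    simp only [hDdef]
    linear_combination -h1 - h2 - skew y z
  have hb : ∀ x y : A, bracket x y = x * D y - y * D x := by
    intro x y
    have h := hleib x 1 y
    rw [two_smul, one_mul] at h
    rw [skew 1 x, skew 1 (x * y), ← hDdef, ← hDdef, hD x y] at h
    linear_combination -h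
  refine ⟨hD, hb, ?_, ?_, ?_, ?_, ?_⟩
  · intro x y z; simp only [hmulN, hD]; ring
  · intro x y z; simp only [hmulN]; ring
  · intro x y z; simp only [hmulN]; ring
  · intro x y z; simp only [hmulN, hD]; ring
  · intro x y; simp only [hmulN]; rw [hb]
end

section
/- Let A = ℂ² with basis e₁,e₂, and let ∘ be a ℂ-bilinear operation on A satisfying the Novikov identities ((x∘y)∘z − (y∘x)∘z = x∘(y∘z) − y∘(x∘z) and (x∘y)∘z = (x∘z)∘y for all x,y,z) and whose commutator satisfies e₁∘e₂ − e₂∘e₁ = e₂. Then there exist a,b ∈ ℂ such that e₁∘e₁ = a e₁ + b e₂, e₁∘e₂ = (a+1) e₂, e₂∘e₁ = a e₂, and e₂∘e₂ = 0. -/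
/-- Any ℂ-bilinear Novikov product on ℂ² whose commutator satisfies
e₁∘e₂ − e₂∘e₁ = e₂ has the form e₁∘e₁ = a e₁ + b e₂, e₁∘e₂ = (a+1) e₂, e₂∘e₁ = a e₂,
e₂∘e₂ = 0 for some a, b ∈ ℂ. -/
theorem stmt_12
    (mul : (Fin 2 → ℂ) →ₗ[ℂ] (Fin 2 → ℂ) →ₗ[ℂ] (Fin 2 → ℂ))
    (hls : ∀ x y z : Fin 2 → ℂ,
        mul (mul x y) z - mul (mul y x) z = mul x (mul y z) - mul y (mul x z))
    (hrc : ∀ x y z : Fin 2 → ℂ, mul (mul x y) z = mul (mul x z) y)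
    (e₁ e₂ : Fin 2 → ℂ) (he₁ : e₁ = ![1, 0]) (he₂ : e₂ = ![0, 1])
    (hcom : mul e₁ e₂ - mul e₂ e₁ = e₂) :
    ∃ a b : ℂ,
      mul e₁ e₁ = a • e₁ + b • e₂ ∧
      mul e₁ e₂ = (a + 1) • e₂ ∧
      mul e₂ e₁ = a • e₂ ∧
      mul e₂ e₂ = 0 := by
  have hv : ∀ v : Fin 2 → ℂ, v = v 0 • e₁ + v 1 • e₂ := by
    intro v; subst he₁ he₂; funext i; fin_cases i <;> simp
  have hcomp : ∀ (x y : Fin 2 → ℂ) (i : Fin 2), mul x y i =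
      x 0 * y 0 * mul e₁ e₁ i + x 0 * y 1 * mul e₁ e₂ i +
      x 1 * y 0 * mul e₂ e₁ i + x 1 * y 1 * mul e₂ e₂ i := by
    intro x y i
    conv_lhs => rw [hv x, hv y]
    simp only [map_add, map_smul, LinearMap.add_apply, LinearMap.smul_apply,
      Pi.add_apply, Pi.smul_apply, smul_eq_mul]
    ring
  have hE10 : e₁ 0 = 1 := by simp [he₁]
  have hE11 : e₁ 1 = 0 := by simp [he₁]
  have hE20 : e₂ 0 = 0 := by simp [he₂]
  have hE21 : e₂ 1 = 1 := by simp [he₂]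
  -- scalar equations from the axioms
  have G0 := congrFun hcom 0
  have G1 := congrFun hcom 1
  simp only [Pi.sub_apply, hE20, hE21] at G0 G1
  have A1 := congrFun (hrc e₁ e₁ e₂) 0
  have A2 := congrFun (hrc e₁ e₁ e₂) 1
  rw [hcomp (mul e₁ e₁) e₂, hcomp (mul e₁ e₂) e₁] at A1 A2
  have B1 := congrFun (hls e₁ e₂ e₁) 0
  have B2 := congrFun (hls e₁ e₂ e₁) 1
  simp only [Pi.sub_apply] at B1 B2
  rw [hcomp (mul e₁ e₂) e₁, hcomp (mul e₂ e₁) e₁, hcomp e₁ (mul e₂ e₁),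
    hcomp e₂ (mul e₁ e₁)] at B1 B2
  have C1 := congrFun (hls e₁ e₂ e₂) 0
  have C2 := congrFun (hls e₁ e₂ e₂) 1
  simp only [Pi.sub_apply] at C1 C2
  rw [hcomp (mul e₁ e₂) e₂, hcomp (mul e₂ e₁) e₂, hcomp e₁ (mul e₂ e₂),
    hcomp e₂ (mul e₁ e₂)] at C1 C2
  simp only [hE10, hE11, hE20, hE21, mul_one, mul_zero, zero_mul, one_mul,
    add_zero, zero_add] at A1 A2 B1 B2 C1 C2
  -- step 1 : q = a
  have hq : mul e₂ e₁ 1 = mul e₁ e₁ 0 := by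
    linear_combination -A2 + B2 - 2 * (mul e₁ e₁ 1) * G0 +
      (mul e₁ e₁ 0 - mul e₂ e₁ 1) * G1
  -- step 2 : d = a + 1
  have hd : mul e₁ e₂ 1 = mul e₁ e₁ 0 + 1 := by linear_combination G1 + hq
  -- step 3 : p = c
  have hp : mul e₂ e₁ 0 = mul e₁ e₂ 0 := by linear_combination -G0
  simp only [hp, hq, hd] at A1 B1 C1 C2
  -- step 4 : c = 0
  have hc : mul e₁ e₂ 0 = 0 := by linear_combination (B1 - A1) / 2
  simp only [hc] at C1 C2
  -- step 5 : r = 0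
  have hr : mul e₂ e₂ 0 = 0 := by linear_combination C1 / 2
  simp only [hr] at C2
  -- step 6 : s = 0
  have hs : mul e₂ e₂ 1 = 0 := by linear_combination C2
  have hp0 : mul e₂ e₁ 0 = 0 := hp.trans hc
  refine ⟨mul e₁ e₁ 0, mul e₁ e₁ 1, hv _, ?_, ?_, ?_⟩
  · rw [hv (mul e₁ e₂), hc, hd, zero_smul, zero_add]
  · rw [hv (mul e₂ e₁), hp0, hq, zero_smul, zero_add]
  · rw [hv (mul e₂ e₂), hr, hs, zero_smul, zero_add, zero_smul]
end

section
/- Let A = ℂ² with basis e₁,e₂ and let a,b ∈ ℂ. Define a ℂ-bilinear operation ∘ on A by e₁∘e₁ = a e₁ + b e₂, e₁∘e₂ = (a+1) e₂, e₂∘e₁ = a e₂, e₂∘e₂ = 0. Then (A,∘) is a Novikov algebra, i.e. for all x,y,z ∈ A: (x∘y)∘z − (y∘x)∘z = x∘(y∘z) − y∘(x∘z) and (x∘y)∘z = (x∘z)∘y; moreover its commutator satisfies e₁∘e₂ − e₂∘e₁ = e₂. -/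
/-!
A bilinear product on `R²` is determined by its values on the basis, so in coordinates the
product is `x ∘ y = (a x₀y₀, b x₀y₀ + (a+1) x₀y₁ + a x₁y₀)`. Both Novikov identities are then
polynomial identities in the coordinates of `x, y, z`.
-/

theorem LinearMap.apply_fin_two_eq {R M : Type*} [CommSemiring R] [AddCommMonoid M] [Module R M]
    (f : (Fin 2 → R) →ₗ[R] (Fin 2 → R) →ₗ[R] M) (x y : Fin 2 → R) :
    f x y = (x 0 * y 0) • f ![1, 0] ![1, 0] + (x 0 * y 1) • f ![1, 0] ![0, 1]
      + (x 1 * y 0) • f ![0, 1] ![1, 0] + (x 1 * y 1) • f ![0, 1] ![0, 1] := by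
  have hdec : ∀ v : Fin 2 → R, v = v 0 • ![1, 0] + v 1 • ![0, 1] := fun v => by
    ext i; fin_cases i <;> simp
  conv_lhs => rw [hdec x, hdec y]
  simp only [map_add, map_smul, LinearMap.add_apply, LinearMap.smul_apply, smul_add, smul_smul]
  module

section NovikovMul

variable {R : Type*} [CommRing R] (a b : R)

def novikovMul (x y : Fin 2 → R) : Fin 2 → R :=
  ![a * x 0 * y 0, b * x 0 * y 0 + (a + 1) * x 0 * y 1 + a * x 1 * y 0]

theorem novikovMul_sub_swap (x y z : Fin 2 → R) :
    novikovMul a b (novikovMul a b x y) z - novikovMul a b (novikovMul a b y x) z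
      = novikovMul a b x (novikovMul a b y z) - novikovMul a b y (novikovMul a b x z) := by
  ext i; fin_cases i <;> simp [novikovMul] <;> ring

theorem novikovMul_right_comm (x y z : Fin 2 → R) :
    novikovMul a b (novikovMul a b x y) z = novikovMul a b (novikovMul a b x z) y := by
  ext i; fin_cases i <;> simp [novikovMul] <;> ring

end NovikovMul

/-- For any a, b ∈ ℂ, the ℂ-bilinear operation on ℂ² defined on the basis by
e₁∘e₁ = a e₁ + b e₂, e₁∘e₂ = (a+1) e₂, e₂∘e₁ = a e₂, e₂∘e₂ = 0 is a Novikov product, and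
its commutator satisfies e₁∘e₂ − e₂∘e₁ = e₂. -/
theorem stmt_13 (a b : ℂ)
    (mul : (Fin 2 → ℂ) →ₗ[ℂ] (Fin 2 → ℂ) →ₗ[ℂ] (Fin 2 → ℂ))
    (e₁ e₂ : Fin 2 → ℂ) (he₁ : e₁ = ![1, 0]) (he₂ : e₂ = ![0, 1])
    (h11 : mul e₁ e₁ = a • e₁ + b • e₂)
    (h12 : mul e₁ e₂ = (a + 1) • e₂)
    (h21 : mul e₂ e₁ = a • e₂)
    (h22 : mul e₂ e₂ = 0) :
    (∀ x y z : Fin 2 → ℂ,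
        mul (mul x y) z - mul (mul y x) z = mul x (mul y z) - mul y (mul x z)) ∧
    (∀ x y z : Fin 2 → ℂ, mul (mul x y) z = mul (mul x z) y) ∧
    mul e₁ e₂ - mul e₂ e₁ = e₂ := by
  subst he₁ he₂
  have hmul : ∀ x y, mul x y = novikovMul a b x y := fun x y => by
    rw [LinearMap.apply_fin_two_eq, h11, h12, h21, h22]
    ext i; fin_cases i <;> simp [novikovMul] <;> ring
  refine ⟨fun x y z => ?_, fun x y z => ?_, ?_⟩
  · simpa only [hmul] using novikovMul_sub_swap a b x y z
  · simpa only [hmul] using novikovMul_right_comm a b x y z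
  · rw [h12, h21]
    module
end

section
/- Let R = ℂ[[h]] be the ring of formal power series over ℂ, M = R² the free R-module with basis e₁,e₂, and a,b ∈ R. Define an R-bilinear operation ·ₕ on M by e₁·ₕe₁ = a e₁ + b e₂, e₁·ₕe₂ = (a+h) e₂, e₂·ₕe₁ = a e₂, e₂·ₕe₂ = 0. Then (M, ·ₕ) is a Novikov algebra over R: for all x,y,z ∈ M, (x·ₕy)·ₕz − (y·ₕx)·ₕz = x·ₕ(y·ₕz) − y·ₕ(x·ₕz) and (x·ₕy)·ₕz = (x·ₕz)·ₕy. -/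
/-- For a, b ∈ ℂ[[h]], the ℂ[[h]]-bilinear operation on M = ℂ[[h]]² given on
the basis by e₁·ₕe₁ = a e₁ + b e₂, e₁·ₕe₂ = (a+h) e₂, e₂·ₕe₁ = a e₂, e₂·ₕe₂ = 0 is a
Novikov algebra over ℂ[[h]] (denoted A_h^{a,b}). -/
theorem stmt_16 (a b : PowerSeries ℂ)
    (mul : (Fin 2 → PowerSeries ℂ) →ₗ[PowerSeries ℂ]
        (Fin 2 → PowerSeries ℂ) →ₗ[PowerSeries ℂ] (Fin 2 → PowerSeries ℂ))
    (e₁ e₂ : Fin 2 → PowerSeries ℂ) (he₁ : e₁ = ![1, 0]) (he₂ : e₂ = ![0, 1])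
    (h11 : mul e₁ e₁ = a • e₁ + b • e₂)
    (h12 : mul e₁ e₂ = (a + PowerSeries.X) • e₂)
    (h21 : mul e₂ e₁ = a • e₂)
    (h22 : mul e₂ e₂ = 0) :
    (∀ x y z : Fin 2 → PowerSeries ℂ,
        mul (mul x y) z - mul (mul y x) z = mul x (mul y z) - mul y (mul x z)) ∧
    (∀ x y z : Fin 2 → PowerSeries ℂ, mul (mul x y) z = mul (mul x z) y) := by
  have key : ∀ x y : Fin 2 → PowerSeries ℂ,
      mul x y = ![x 0 * y 0 * a,
        x 0 * y 0 * b + x 0 * y 1 * (a + PowerSeries.X) + x 1 * y 0 * a] := by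
    intro x y
    have hx : x = x 0 • e₁ + x 1 • e₂ := by
      subst he₁ he₂; funext i; fin_cases i <;> simp
    have hy : y = y 0 • e₁ + y 1 • e₂ := by
      subst he₁ he₂; funext i; fin_cases i <;> simp
    conv_lhs => rw [hx, hy]
    simp only [map_add, map_smul, LinearMap.add_apply, LinearMap.smul_apply,
      h11, h12, h21, h22, smul_zero, smul_add, smul_smul]
    funext i
    subst he₁ he₂
    fin_cases i <;> simp <;> ring
  constructor
  · intro x y z
    simp only [key]
    funext i
    fin_cases i <;> simp <;> ring
  · intro x y z
    simp only [key]
    funext i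
    fin_cases i
    · simp
      exact Or.inl (by ring)
    · simp
      ring
end

section
/- Let R = ℂ[[h]] be the ring of formal power series over ℂ and M = R² the free R-module with basis e₁,e₂. Suppose ·ₕ is an R-bilinear operation on M making (M,·ₕ) a Novikov algebra over R (i.e. for all x,y,z ∈ M: (x·ₕy)·ₕz − (y·ₕx)·ₕz = x·ₕ(y·ₕz) − y·ₕ(x·ₕz) and (x·ₕy)·ₕz = (x·ₕz)·ₕy), and that e₁·ₕe₂ − e₂·ₕe₁ − h e₂ ∈ h²M. Then there exist E₁, E₂ ∈ M and a,b ∈ R such that E₁ − e₁ ∈ hM and E₂ − e₂ ∈ hM, and E₁·ₕE₁ = a E₁ + b E₂, E₁·ₕE₂ = (a+h) E₂, E₂·ₕE₁ = a E₂, E₂·ₕE₂ = 0. -/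
/-!
Write `e₁·e₂ − e₂·e₁ = h e₂ + h² m` with `m = m₁ e₁ + m₂ e₂`. Since `1 + h m₂` is a unit of `ℂ⟦h⟧`,
the vectors `f = (1 + h m₂)⁻¹ e₁` and `c = e₂ + h m` form a basis of `M`, and bilinearity gives
`f·c − c·f = h c`. In any rank-two Novikov algebra over a domain with a basis `f, c` such that
`f·c − c·f = t c` (`t ≠ 0`, `2 ≠ 0`), right commutativity `(f·f)·c = (f·c)·f` and left symmetry at
`(f, c, f)` and `(f, c, c)` are polynomial identities in the structure constants; cancelling `2t`
and `t` from them shows successively that `c·f = a c`, that `f·f = a f + b c`, and that `c·c = 0`.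
-/

open Module PowerSeries

theorem Module.Basis.repr_bilin_eq_sum {R M ι : Type*} [CommSemiring R] [AddCommMonoid M]
    [Module R M] [Fintype ι] (b : Basis ι R M) (B : M →ₗ[R] M →ₗ[R] M) (x y : M) (k : ι) :
    b.repr (B x y) k = ∑ i, ∑ j, b.repr x i * b.repr y j * b.repr (B (b i) (b j)) k := by
  conv_lhs => rw [← b.sum_repr x, ← b.sum_repr y]
  simp only [map_sum, map_smul, LinearMap.sum_apply, LinearMap.smul_apply, Finsupp.coe_finsetSum,
    Finset.sum_apply, Finsupp.smul_apply, smul_eq_mul, Finset.mul_sum, mul_assoc]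
  rw [Finset.sum_comm]
  simp only [mul_left_comm]

theorem LinearMap.sub_swap_smul_add_smul {R M : Type*} [CommRing R] [AddCommGroup M] [Module R M]
    (mul : M →ₗ[R] M →ₗ[R] M) (x y : M) (a β : R) :
    mul x (a • x + β • y) - mul (a • x + β • y) x = β • (mul x y - mul y x) := by
  simp only [map_add, map_smul, LinearMap.add_apply, LinearMap.smul_apply]
  module

theorem exists_novikov_normal_form {R M : Type*} [CommRing R] [IsDomain R] [AddCommGroup M]
    [Module R M] (b : Basis (Fin 2) R M) (mul : M →ₗ[R] M →ₗ[R] M)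
    (hls : ∀ x y z, mul (mul x y) z - mul (mul y x) z = mul x (mul y z) - mul y (mul x z))
    (hrc : ∀ x y z, mul (mul x y) z = mul (mul x z) y)
    {t : R} (ht : t ≠ 0) (h2 : (2 : R) ≠ 0)
    (hbr : mul (b 0) (b 1) - mul (b 1) (b 0) = t • b 1) :
    ∃ a β : R, mul (b 0) (b 0) = a • b 0 + β • b 1 ∧ mul (b 0) (b 1) = (a + t) • b 1 ∧
      mul (b 1) (b 0) = a • b 1 ∧ mul (b 1) (b 1) = 0 := by
  have coord : ∀ {x y : M}, x = y → ∀ k, b.repr x k = b.repr y k := fun h k => by rw [h]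
  have hexp : ∀ x, x = b.repr x 0 • b 0 + b.repr x 1 • b 1 := fun x => by
    rw [← Fin.sum_univ_two (fun i => b.repr x i • b i), b.sum_repr]
  have hff := hexp (mul (b 0) (b 0))
  have hfc := hexp (mul (b 0) (b 1))
  have hcf := hexp (mul (b 1) (b 0))
  have hcc := hexp (mul (b 1) (b 1))
  have hq := coord hbr
  have hrc₀₀₁ := coord (hrc (b 0) (b 0) (b 1))
  have hls₀₁₀ := coord (hls (b 0) (b 1) (b 0))
  have hls₀₁₁ := coord (hls (b 0) (b 1) (b 1))
  simp only [map_sub, map_smul, Finsupp.sub_apply, Finsupp.smul_apply, smul_eq_mul,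
    Basis.repr_self, b.repr_bilin_eq_sum mul (mul _ _), b.repr_bilin_eq_sum mul (b _) (mul _ _),
    Fin.sum_univ_two, Finsupp.single_apply, Fin.forall_fin_two, Fin.isValue, Fin.reduceEq, if_true,
    if_false, mul_one, mul_zero, zero_mul, one_mul, add_zero, zero_add] at hq hrc₀₀₁ hls₀₁₀ hls₀₁₁
  set p₁ := b.repr (mul (b 0) (b 0)) 0
  set p₂ := b.repr (mul (b 0) (b 0)) 1
  set q₁ := b.repr (mul (b 0) (b 1)) 0
  set q₂ := b.repr (mul (b 0) (b 1)) 1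
  set r₁ := b.repr (mul (b 1) (b 0)) 0
  set r₂ := b.repr (mul (b 1) (b 0)) 1
  set s₁ := b.repr (mul (b 1) (b 1)) 0
  set s₂ := b.repr (mul (b 1) (b 1)) 1
  obtain ⟨hq₁, hq₂⟩ : q₁ = r₁ ∧ q₂ = r₂ + t :=
    ⟨by linear_combination hq.1, by linear_combination hq.2⟩
  rw [hq₁, hq₂] at hrc₀₀₁ hls₀₁₀ hls₀₁₁
  have h2t : 2 * t ≠ 0 := mul_ne_zero h2 ht
  have hr₁ : r₁ = 0 := eq_zero_of_ne_zero_of_mul_left_eq_zero h2t <| by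
    linear_combination hls₀₁₀.1 - hrc₀₀₁.1
  rw [hr₁] at hrc₀₀₁ hls₀₁₀ hls₀₁₁
  have hp₁ : p₁ = r₂ := sub_eq_zero.mp <| eq_zero_of_ne_zero_of_mul_left_eq_zero ht <| by
    linear_combination hrc₀₀₁.2 - hls₀₁₀.2
  have hs₁ : s₁ = 0 := eq_zero_of_ne_zero_of_mul_left_eq_zero h2t <| by
    linear_combination hls₀₁₁.1 + s₁ * hp₁
  have hs₂ : s₂ = 0 := eq_zero_of_ne_zero_of_mul_left_eq_zero ht <| by
    linear_combination hls₀₁₁.2 + p₂ * hs₁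
  refine ⟨r₂, p₂, ?_, ?_, ?_, ?_⟩
  · rw [hff, hp₁]
  · rw [hfc, hq₁, hq₂, hr₁, zero_smul, zero_add]
  · rw [hcf, hr₁, zero_smul, zero_add]
  · rw [hcc, hs₁, hs₂, zero_smul, zero_smul, add_zero]

theorem PowerSeries.exists_basis_sub_swap_eq_X_smul {k : Type*} [Field k]
    (mul : (Fin 2 → k⟦X⟧) →ₗ[k⟦X⟧] (Fin 2 → k⟦X⟧) →ₗ[k⟦X⟧] (Fin 2 → k⟦X⟧)) (m : Fin 2 → k⟦X⟧)
    (hm : mul ![1, 0] ![0, 1] - mul ![0, 1] ![1, 0] - (X : k⟦X⟧) • ![0, 1] = (X ^ 2 : k⟦X⟧) • m) :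
    ∃ b : Basis (Fin 2) k⟦X⟧ (Fin 2 → k⟦X⟧),
      (∃ n : Fin 2 → k⟦X⟧, b 0 - ![1, 0] = (X : k⟦X⟧) • n) ∧
      (∃ n : Fin 2 → k⟦X⟧, b 1 - ![0, 1] = (X : k⟦X⟧) • n) ∧
      mul (b 0) (b 1) - mul (b 1) (b 0) = (X : k⟦X⟧) • b 1 := by
  set u : k⟦X⟧ := 1 + X * m 1
  have hu : u⁻¹ * u = 1 := PowerSeries.inv_mul_cancel _ (by simp [u])
  set f : Fin 2 → k⟦X⟧ := u⁻¹ • ![1, 0]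
  set c : Fin 2 → k⟦X⟧ := ![0, 1] + (X : k⟦X⟧) • m
  have hdet : (Pi.basisFun k⟦X⟧ (Fin 2)).det ![f, c] = 1 := by
    rw [Basis.det_apply, Matrix.det_fin_two]
    simp [Basis.toMatrix_apply, Matrix.vecHead, Matrix.vecTail, f, c, u]
  obtain ⟨hli, hspan⟩ := (Pi.basisFun k⟦X⟧ (Fin 2)).is_basis_iff_det.mpr (hdet ▸ isUnit_one)
  refine ⟨Basis.mk hli hspan.ge, ⟨-(u⁻¹ * m 1) • ![1, 0], ?_⟩, ⟨m, ?_⟩, ?_⟩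
  · funext i
    fin_cases i
    · simp only [Matrix.smul_cons, smul_eq_mul, mul_one, mul_zero, Matrix.smul_empty, Fin.isValue,
        Basis.coe_mk, Matrix.cons_val_zero, Fin.zero_eta, Pi.sub_apply, neg_smul, Matrix.neg_cons,
        neg_zero, Matrix.neg_empty, Pi.smul_apply, mul_neg, f]
      linear_combination hu
    · simp [f]
  · simp only [Basis.mk_apply, Matrix.cons_val_one, Matrix.cons_val_zero, c]
    exact add_sub_cancel_left _ _
  · have hc : c = (X * m 0) • ![1, 0] + u • ![0, 1] := by
      funext i
      fin_cases i <;> simp [Matrix.vecHead, Matrix.vecTail, c, u]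
    have hb : mul ![1, 0] ![0, 1] - mul ![0, 1] ![1, 0] = (X : k⟦X⟧) • c := by
      rw [smul_add, smul_smul, ← sq, ← hm, add_sub_cancel]
    have hfc : mul ![1, 0] c - mul c ![1, 0] = u • (X : k⟦X⟧) • c := by
      conv_lhs => rw [hc]
      rw [LinearMap.sub_swap_smul_add_smul, hb]
    simp only [Basis.mk_apply, Matrix.cons_val_zero, Matrix.cons_val_one, f, map_smul,
      LinearMap.smul_apply, ← smul_sub]
    rw [hfc, smul_smul, hu, one_smul]

/-- If ·ₕ is an ℂ[[h]]-bilinear Novikov product on M = ℂ[[h]]² with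
e₁·ₕe₂ − e₂·ₕe₁ ≡ h e₂ (mod h²M), then there is a basis-like pair E₁ ≡ e₁, E₂ ≡ e₂ (mod hM)
and a, b ∈ ℂ[[h]] with E₁·ₕE₁ = a E₁ + b E₂, E₁·ₕE₂ = (a+h) E₂, E₂·ₕE₁ = a E₂,
E₂·ₕE₂ = 0. -/
theorem stmt_17
    (mul : (Fin 2 → PowerSeries ℂ) →ₗ[PowerSeries ℂ]
        (Fin 2 → PowerSeries ℂ) →ₗ[PowerSeries ℂ] (Fin 2 → PowerSeries ℂ))
    (hls : ∀ x y z : Fin 2 → PowerSeries ℂ,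
        mul (mul x y) z - mul (mul y x) z = mul x (mul y z) - mul y (mul x z))
    (hrc : ∀ x y z : Fin 2 → PowerSeries ℂ, mul (mul x y) z = mul (mul x z) y)
    (e₁ e₂ : Fin 2 → PowerSeries ℂ) (he₁ : e₁ = ![1, 0]) (he₂ : e₂ = ![0, 1])
    (hcom : ∃ m : Fin 2 → PowerSeries ℂ,
        mul e₁ e₂ - mul e₂ e₁ - (PowerSeries.X : PowerSeries ℂ) • e₂ = ((PowerSeries.X : PowerSeries ℂ) ^ 2) • m) :
    ∃ (E₁ E₂ : Fin 2 → PowerSeries ℂ) (a b : PowerSeries ℂ),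
      (∃ m : Fin 2 → PowerSeries ℂ, E₁ - e₁ = (PowerSeries.X : PowerSeries ℂ) • m) ∧
      (∃ m : Fin 2 → PowerSeries ℂ, E₂ - e₂ = (PowerSeries.X : PowerSeries ℂ) • m) ∧
      mul E₁ E₁ = a • E₁ + b • E₂ ∧
      mul E₁ E₂ = (a + PowerSeries.X) • E₂ ∧
      mul E₂ E₁ = a • E₂ ∧
      mul E₂ E₂ = 0 := by
  subst he₁ he₂
  obtain ⟨m, hm⟩ := hcom
  obtain ⟨B, hB₀, hB₁, hbr⟩ := exists_basis_sub_swap_eq_X_smul mul m hm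
  have h2 : (2 : ℂ⟦X⟧) ≠ 0 := fun h =>
    two_ne_zero (α := ℂ) (by simpa only [map_ofNat, map_zero] using congrArg constantCoeff h)
  obtain ⟨a, β, h₀₀, h₀₁, h₁₀, h₁₁⟩ := exists_novikov_normal_form B mul hls hrc X_ne_zero h2 hbr
  exact ⟨B 0, B 1, a, β, hB₀, hB₁, h₀₀, h₀₁, h₁₀, h₁₁⟩
end

section
/- Let R = ℂ[[h]] be the ring of formal power series over ℂ, M = R² the free R-module with basis e₁,e₂, and a,b,a',b' ∈ R. Let ·ₕ and ·ₕ' be the R-bilinear operations A_h^{a,b} and A_h^{a',b'} on M (so e₁·ₕe₁ = a e₁ + b e₂, e₁·ₕe₂ = (a+h)e₂, e₂·ₕe₁ = a e₂, e₂·ₕe₂ = 0, and similarly for ·ₕ' with a',b'). Then there exists an R-linear automorphism f of M with f(x) − x ∈ hM for all x ∈ M and f(x·ₕy) = f(x)·ₕ'f(y) for all x,y ∈ M, if and only if a = a' and there exist ε, μ ∈ R with ε − 1 ∈ hR such that b' = bε − μh(a + h). -/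
/-!
An automorphism `f ≡ id (mod h)` sends `e₁ ↦ u`, `e₂ ↦ v` with `v₁ ≡ 1 (mod h)`, a unit since
`h` lies in the Jacobson radical. Comparing the first coordinates of `f(e₁e₂)` and `f(e₂e₁)` gives
`h v₀ = 0`, so `v₀ = 0`; comparing the second coordinates then forces `u₀ = 1` and `a = a'`, and `f(e₁e₁)` yields `b' = b v₁ - u₁ (a + h)`.
Conversely, for `ε` a unit and any `μ`, the matrix `!![1, 0; μ, ε]` carries `A_h^{a,b}` to
`A_h^{a, bε - μ(a+h)}`; it is `≡ id (mod h)` exactly when `h ∣ μ` and `h ∣ ε - 1`.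
-/

namespace Novikov

open Matrix

variable {R : Type*} [CommRing R]

/-- `A_h^{a,b}` in the coordinates of `e₁ = ![1, 0]`, `e₂ = ![0, 1]`. -/
def novikovMul (h a b : R) (x y : Fin 2 → R) : Fin 2 → R :=
  ![x 0 * y 0 * a, x 0 * y 0 * b + x 0 * y 1 * (a + h) + x 1 * y 0 * a]

variable {h a b a' b' : R}

theorem eq_novikovMul_of_basis (mul : (Fin 2 → R) →ₗ[R] (Fin 2 → R) →ₗ[R] (Fin 2 → R))
    (h11 : mul ![1, 0] ![1, 0] = a • ![1, 0] + b • ![0, 1])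
    (h12 : mul ![1, 0] ![0, 1] = (a + h) • ![0, 1])
    (h21 : mul ![0, 1] ![1, 0] = a • ![0, 1])
    (h22 : mul ![0, 1] ![0, 1] = 0) (x y : Fin 2 → R) :
    mul x y = novikovMul h a b x y := by
  have basis : ∀ z : Fin 2 → R, z = z 0 • ![1, 0] + z 1 • ![0, 1] := by
    intro z; funext i; fin_cases i <;> simp
  rw [basis x, basis y]
  simp only [map_add, map_smul, LinearMap.add_apply, LinearMap.smul_apply,
    h11, h12, h21, h22, smul_zero, add_zero]
  funext i; fin_cases i <;> simp [novikovMul] <;> ring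

theorem novikovMul_e₁_e₁ : novikovMul h a b ![1, 0] ![1, 0] = a • ![1, 0] + b • ![0, 1] := by
  funext i; fin_cases i <;> simp [novikovMul]

theorem novikovMul_e₁_e₂ : novikovMul h a b ![1, 0] ![0, 1] = (a + h) • ![0, 1] := by
  funext i; fin_cases i <;> simp [novikovMul]

theorem novikovMul_e₂_e₁ : novikovMul h a b ![0, 1] ![1, 0] = a • ![0, 1] := by
  funext i; fin_cases i <;> simp [novikovMul]

theorem eq_of_images_basis (hreg : IsLeftRegular h) {u v : Fin 2 → R} (hv : IsUnit (v 1))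
    (E11 : a • u + b • v = novikovMul h a' b' u u)
    (E12 : (a + h) • v = novikovMul h a' b' u v)
    (E21 : a • v = novikovMul h a' b' v u) :
    a = a' ∧ b' = b * v 1 - u 1 * (a + h) := by
  have E11₁ := congrFun E11 1
  have E12₀ := congrFun E12 0
  have E12₁ := congrFun E12 1
  have E21₀ := congrFun E21 0
  have E21₁ := congrFun E21 1
  simp only [novikovMul, Pi.add_apply, Pi.smul_apply, smul_eq_mul, cons_val_zero,
    cons_val_one] at E11₁ E12₀ E12₁ E21₀ E21₁
  have hv₀ : v 0 = 0 := hreg.mul_left_eq_zero_iff.mp (by linear_combination E12₀ - E21₀)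
  have hu₀ : u 0 = 1 := by
    have : v 1 * (h * (u 0 - 1)) = 0 := by
      linear_combination E21₁ - E12₁ + h * u 1 * hv₀
    rwa [hv.mul_right_eq_zero, hreg.mul_left_eq_zero_iff, sub_eq_zero] at this
  have ha : a = a' := by
    have : v 1 * (a - a') = 0 := by
      linear_combination E21₁ + (u 0 * b' + u 1 * (a' + h)) * hv₀ + a' * v 1 * hu₀
    rwa [hv.mul_right_eq_zero, sub_eq_zero] at this
  subst ha
  refine ⟨rfl, ?_⟩
  rw [hu₀] at E11₁
  linear_combination -E11₁

theorem eq_of_intertwines (hreg : IsLeftRegular h) (hjac : h ∈ Ideal.jacobson ⊥)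
    (f : (Fin 2 → R) →ₗ[R] (Fin 2 → R)) (hf : ∀ x, ∃ m, f x - x = h • m)
    (hfmul : ∀ x y, f (novikovMul h a b x y) = novikovMul h a' b' (f x) (f y)) :
    a = a' ∧ ∃ ε μ : R, h ∣ ε - 1 ∧ b' = b * ε - μ * h * (a + h) := by
  obtain ⟨m, hm⟩ := hf ![1, 0]
  obtain ⟨m', hm'⟩ := hf ![0, 1]
  have hu₁ : f ![1, 0] 1 = h * m 1 := by simpa using congrFun hm 1
  have hv₁ : f ![0, 1] 1 = h * m' 1 + 1 := by
    linear_combination (by simpa using congrFun hm' 1 : f ![0, 1] 1 - 1 = h * m' 1)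
  have E11 := hfmul ![1, 0] ![1, 0]
  have E12 := hfmul ![1, 0] ![0, 1]
  have E21 := hfmul ![0, 1] ![1, 0]
  rw [novikovMul_e₁_e₁, map_add, map_smul, map_smul] at E11
  rw [novikovMul_e₁_e₂, map_smul] at E12
  rw [novikovMul_e₂_e₁, map_smul] at E21
  obtain ⟨ha, hb'⟩ := eq_of_images_basis hreg
    (hv₁ ▸ Ideal.mem_jacobson_bot.mp hjac (m' 1)) E11 E12 E21
  refine ⟨ha, f ![0, 1] 1, m 1, ⟨m' 1, by rw [hv₁]; ring⟩, ?_⟩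
  rw [hb', hu₁]; ring

theorem mulVec_novikovMul (μ ε : R) (x y : Fin 2 → R) :
    !![1, 0; μ, ε] *ᵥ novikovMul h a b x y =
      novikovMul h a (b * ε - μ * (a + h)) (!![1, 0; μ, ε] *ᵥ x) (!![1, 0; μ, ε] *ᵥ y) := by
  funext i
  fin_cases i <;> simp [novikovMul, mulVec, dotProduct, Fin.sum_univ_two]
  ring

theorem exists_intertwines (hjac : h ∈ Ideal.jacobson ⊥) {ε μ : R} (hε : h ∣ ε - 1) :
    ∃ f : (Fin 2 → R) ≃ₗ[R] (Fin 2 → R), (∀ x, ∃ m, f x - x = h • m) ∧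
      ∀ x y, f (novikovMul h a b x y) =
        novikovMul h a (b * ε - μ * h * (a + h)) (f x) (f y) := by
  obtain ⟨r, hr⟩ := hε
  have hunit : IsUnit (!![1, 0; μ * h, ε]).det := by
    simpa [det_fin_two_of, show ε = h * r + 1 by linear_combination hr]
      using Ideal.mem_jacobson_bot.mp hjac r
  let f := toLinearEquiv' _ (invertibleOfIsUnitDet _ hunit)
  have hf : ∀ x, f x = !![1, 0; μ * h, ε] *ᵥ x := fun _ => rfl
  refine ⟨f, fun x => ⟨![0, μ * x 0 + r * x 1], ?_⟩, fun x y => ?_⟩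
  · funext i
    fin_cases i <;> simp [hf, dotProduct, Fin.sum_univ_two]
    linear_combination x 1 * hr
  · simp only [hf, mulVec_novikovMul]

theorem intertwines_iff (hreg : IsLeftRegular h) (hjac : h ∈ Ideal.jacobson ⊥) :
    (∃ f : (Fin 2 → R) ≃ₗ[R] (Fin 2 → R), (∀ x, ∃ m, f x - x = h • m) ∧
      ∀ x y, f (novikovMul h a b x y) = novikovMul h a' b' (f x) (f y)) ↔
    a = a' ∧ ∃ ε μ : R, h ∣ ε - 1 ∧ b' = b * ε - μ * h * (a + h) := by
  constructor
  · rintro ⟨f, hf, hfmul⟩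
    exact eq_of_intertwines hreg hjac f.toLinearMap hf hfmul
  · rintro ⟨rfl, ε, μ, hε, rfl⟩
    exact exists_intertwines hjac hε

end Novikov

open Novikov in
/-- Two Novikov products A_h^{a,b} and A_h^{a',b'} on M = ℂ[[h]]² are
equivalent (via an R-linear automorphism f with f ≡ id mod h intertwining the products)
if and only if a = a' and b' = bε − μh(a+h) for some ε ≡ 1 (mod h) and μ ∈ ℂ[[h]]. -/
theorem stmt_18 (a b a' b' : PowerSeries ℂ)
    (mul mul' : (Fin 2 → PowerSeries ℂ) →ₗ[PowerSeries ℂ]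
        (Fin 2 → PowerSeries ℂ) →ₗ[PowerSeries ℂ] (Fin 2 → PowerSeries ℂ))
    (e₁ e₂ : Fin 2 → PowerSeries ℂ) (he₁ : e₁ = ![1, 0]) (he₂ : e₂ = ![0, 1])
    (h11 : mul e₁ e₁ = a • e₁ + b • e₂)
    (h12 : mul e₁ e₂ = (a + PowerSeries.X) • e₂)
    (h21 : mul e₂ e₁ = a • e₂)
    (h22 : mul e₂ e₂ = 0)
    (h11' : mul' e₁ e₁ = a' • e₁ + b' • e₂)
    (h12' : mul' e₁ e₂ = (a' + PowerSeries.X) • e₂)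
    (h21' : mul' e₂ e₁ = a' • e₂)
    (h22' : mul' e₂ e₂ = 0) :
    (∃ f : (Fin 2 → PowerSeries ℂ) ≃ₗ[PowerSeries ℂ] (Fin 2 → PowerSeries ℂ),
        (∀ x : Fin 2 → PowerSeries ℂ,
          ∃ m : Fin 2 → PowerSeries ℂ, f x - x = (PowerSeries.X : PowerSeries ℂ) • m) ∧
        (∀ x y : Fin 2 → PowerSeries ℂ, f (mul x y) = mul' (f x) (f y))) ↔
    (a = a' ∧ ∃ ε μ : PowerSeries ℂ,
        (∃ r : PowerSeries ℂ, ε - 1 = PowerSeries.X * r) ∧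
        b' = b * ε - μ * PowerSeries.X * (a + PowerSeries.X)) := by
  subst he₁ he₂
  have hreg : IsLeftRegular (PowerSeries.X : PowerSeries ℂ) :=
    mul_right_injective₀ PowerSeries.X_ne_zero
  have hjac : (PowerSeries.X : PowerSeries ℂ) ∈ Ideal.jacobson ⊥ :=
    Ideal.mem_jacobson_bot.mpr fun r => PowerSeries.isUnit_iff_constantCoeff.mpr (by simp)
  simp only [eq_novikovMul_of_basis mul h11 h12 h21 h22,
    eq_novikovMul_of_basis mul' h11' h12' h21' h22']
  exact intertwines_iff hreg hjac
end
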